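/- The set of feasible pairs (μ, ν) for the linear program P is compact in the topology of weak convergence of measures: every sequence of feasible pairs (μ_n, ν_n) has a subsequence (μ_{n_k}, ν_{n_k}) and a feasible pair (μ, ν) such that ∫ φ dμ_{n_k} → ∫ φ dμ for every continuous φ : S → ℝ and ∫ ψ dν_{n_k} → ∫ ψ dν for every continuous ψ : K → ℝ. -/

import Mathlib

/-!
Testing the constraint with `g = 1` and `g(t, x) = t` shows that every feasible `ν` has mass `1`
and every feasible `μ` has mass `T`. After normalisation both families are probability measures
concentrated on fixed compact sets, hence tight, and Prokhorov's theorem in the metrizable space of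
probability measures yields a weakly convergent subsequence. On those compact sets a continuous
function agrees with a bounded continuous one (Tietze), so all continuous test functions pass to
the limit; since `g` is `C¹`, so does the constraint, and the limit pair is feasible.
-/

noncomputable section
open MeasureTheory Set

/-- Feasibility for the weak linear program `P`: `(μ, ν)` are finite nonnegative
Borel measures supported on `S = [0,T] × X × U` and on `K` respectively, and
for every `C¹` test function `g : [0,T] × ℝⁿ → ℝ`,
`∫_K g(T,x) dν − ∫_S (∂g/∂t + ⟨∇ₓg, f⟩) dμ = g(0,x0)`; here
`∂g/∂t(t,x) + ⟨∇ₓ g(t,x), f(t,x,u)⟩` is the derivative of `g` at `(t,x)` in the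
direction `(1, f(t,x,u))`. -/
def LPFeasible (n m : ℕ) (T : ℝ) (x0 : Fin n → ℝ)
    (Xs K : Set (Fin n → ℝ)) (Us : Set (Fin m → ℝ))
    (f : ℝ × (Fin n → ℝ) × (Fin m → ℝ) → (Fin n → ℝ))
    (μ : Measure (ℝ × (Fin n → ℝ) × (Fin m → ℝ))) (ν : Measure (Fin n → ℝ)) : Prop :=
  IsFiniteMeasure μ ∧ IsFiniteMeasure ν ∧
  μ ((Icc 0 T ×ˢ Xs ×ˢ Us)ᶜ) = 0 ∧ ν Kᶜ = 0 ∧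
  ∀ g : ℝ × (Fin n → ℝ) → ℝ, ContDiff ℝ 1 g →
    (∫ ξ, g (T, ξ) ∂ν) - (∫ p, fderiv ℝ g (p.1, p.2.1) (1, f p) ∂μ) = g (0, x0)

/-- Cost of a pair of measures: `∫_S h dμ + ∫_K H dν`. -/
def LPCost (n m : ℕ)
    (h : ℝ × (Fin n → ℝ) × (Fin m → ℝ) → ℝ) (H : (Fin n → ℝ) → ℝ)
    (μ : Measure (ℝ × (Fin n → ℝ) × (Fin m → ℝ))) (ν : Measure (Fin n → ℝ)) : ℝ :=
  (∫ p, h p ∂μ) + (∫ ξ, H ξ ∂ν)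

open Filter Topology
open scoped BoundedContinuousFunction NNReal ENNReal

lemma IsCompact.exists_boundedContinuousFunction_eqOn {E : Type*} [TopologicalSpace E]
    [T2Space E] [NormalSpace E] {S : Set E} (hS : IsCompact S)
    {g : E → ℝ} (hg : Continuous g) : ∃ h : E →ᵇ ℝ, EqOn h g S := by
  have : CompactSpace S := isCompact_iff_compactSpace.mp hS
  obtain ⟨h, -, hh⟩ := BoundedContinuousFunction.exists_norm_eq_domRestrict_eq_of_closed
    (.mkOfCompact ⟨S.domRestrict g, hg.comp continuous_subtype_val⟩) hS.isClosed
  exact ⟨h, fun x hx => congr($hh ⟨x, hx⟩)⟩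

section WeakCompactness

variable {E : Type*} [TopologicalSpace E] [TopologicalSpace.MetrizableSpace E]
  [TopologicalSpace.SeparableSpace E] [MeasurableSpace E] [BorelSpace E]

theorem exists_subseq_tendsto_integral_of_isProbabilityMeasure {S : Set E} (hS : IsCompact S)
    (μs : ℕ → Measure E) [∀ k, IsProbabilityMeasure (μs k)] (hsupp : ∀ k, μs k Sᶜ = 0) :
    ∃ φ : ℕ → ℕ, StrictMono φ ∧ ∃ μ : Measure E, IsProbabilityMeasure μ ∧ μ Sᶜ = 0 ∧
      ∀ g : E → ℝ, Continuous g →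
        Tendsto (fun k => ∫ x, g x ∂μs (φ k)) atTop (𝓝 (∫ x, g x ∂μ)) := by
  let P : ℕ → ProbabilityMeasure E := fun k => ⟨μs k, inferInstance⟩
  have hcpt := isCompact_setOfPred_probabilityMeasure_mass_eq_compl_isCompact_le
    (u := fun _ => 0) (K := fun _ => S) tendsto_const_nhds (fun _ => hS) (Or.inr monotone_const)
  obtain ⟨μ, hμmem, φ, hφ, hlim⟩ := hcpt.tendsto_subseq (x := P) (fun k _ => by
    simp [P, hsupp])
  have hμS : (μ : Measure E) Sᶜ = 0 := by simpa using hμmem 0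
  refine ⟨φ, hφ, μ, inferInstance, hμS, fun g hg => ?_⟩
  obtain ⟨h, hh⟩ := hS.exists_boundedContinuousFunction_eqOn hg
  have hint : ∀ {ν : Measure E}, ν Sᶜ = 0 → ∫ x, h x ∂ν = ∫ x, g x ∂ν := fun hν =>
    integral_congr_ae (hh.eventuallyEq_of_mem (mem_ae_iff.2 hν))
  have hconv := ProbabilityMeasure.tendsto_iff_forall_integral_tendsto.1 hlim h
  rw [hint hμS] at hconv
  exact hconv.congr fun k => hint (hsupp (φ k))

theorem exists_subseq_tendsto_integral_of_measure_univ_eq {S : Set E} (hS : IsCompact S)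
    (c : ℝ≥0) (μs : ℕ → Measure E) (hmass : ∀ k, μs k univ = c) (hsupp : ∀ k, μs k Sᶜ = 0) :
    ∃ φ : ℕ → ℕ, StrictMono φ ∧ ∃ μ : Measure E, IsFiniteMeasure μ ∧ μ Sᶜ = 0 ∧
      ∀ g : E → ℝ, Continuous g →
        Tendsto (fun k => ∫ x, g x ∂μs (φ k)) atTop (𝓝 (∫ x, g x ∂μ)) := by
  rcases eq_or_ne c 0 with rfl | hc
  · have hzero : ∀ k, μs k = 0 := fun k => Measure.measure_univ_eq_zero.1 (by simpa using hmass k)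
    exact ⟨id, strictMono_id, 0, inferInstance, rfl, fun g _ => by simp [hzero]⟩
  have : ∀ k, IsProbabilityMeasure (c⁻¹ • μs k) := fun k =>
    ⟨by simp [hmass, ENNReal.smul_def, ENNReal.inv_mul_cancel, hc]⟩
  obtain ⟨φ, hφ, μ, hμ, hμS, hconv⟩ :=
    exists_subseq_tendsto_integral_of_isProbabilityMeasure hS (fun k => c⁻¹ • μs k)
      (fun k => by simp [hsupp])
  refine ⟨φ, hφ, c • μ, inferInstance, by simp [hμS], fun g hg => ?_⟩
  have hc' : (c : ℝ) ≠ 0 := by exact_mod_cast hc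
  simpa [integral_smul_nnreal_measure, NNReal.smul_def, hc'] using (hconv g hg).const_mul (c : ℝ)

end WeakCompactness

namespace LPFeasible

variable {n m : ℕ} {T : ℝ} {x0 : Fin n → ℝ} {Xs K : Set (Fin n → ℝ)} {Us : Set (Fin m → ℝ)}
  {f : ℝ × (Fin n → ℝ) × (Fin m → ℝ) → (Fin n → ℝ)}
  {μ : Measure (ℝ × (Fin n → ℝ) × (Fin m → ℝ))} {ν : Measure (Fin n → ℝ)}

theorem measure_univ_eq_one (h : LPFeasible n m T x0 Xs K Us f μ ν) : ν univ = 1 := by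
  obtain ⟨-, hν, -, -, hweak⟩ := h
  have := hweak (fun _ => 1) contDiff_const
  simp only [fderiv_fun_const, Pi.zero_apply, zero_apply, integral_zero,
    sub_zero, integral_const, smul_eq_mul, mul_one] at this
  rw [← ENNReal.ofReal_toReal (measure_ne_top ν univ), ← measureReal_def, this, ENNReal.ofReal_one]

theorem measure_univ_eq_ofReal (h : LPFeasible n m T x0 Xs K Us f μ ν) :
    μ univ = ENNReal.ofReal T := by
  have hν := h.measure_univ_eq_one
  obtain ⟨hμ, -, -, -, hweak⟩ := h
  have := hweak Prod.fst contDiff_fst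
  simp only [integral_const, measureReal_def, hν, ENNReal.toReal_one, smul_eq_mul, one_mul,
    fderiv_fst, ContinuousLinearMap.coe_fst', mul_one] at this
  rw [← ENNReal.ofReal_toReal (measure_ne_top μ univ)]
  congr 1
  linarith

theorem of_tendsto {μs : ℕ → Measure (ℝ × (Fin n → ℝ) × (Fin m → ℝ))}
    {νs : ℕ → Measure (Fin n → ℝ)} (hfeas : ∀ k, LPFeasible n m T x0 Xs K Us f (μs k) (νs k))
    (hf : Continuous f) [IsFiniteMeasure μ] [IsFiniteMeasure ν]
    (hμS : μ ((Icc 0 T ×ˢ Xs ×ˢ Us)ᶜ) = 0) (hνK : ν Kᶜ = 0)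
    (hμ : ∀ g : ℝ × (Fin n → ℝ) × (Fin m → ℝ) → ℝ, Continuous g →
      Tendsto (fun k => ∫ p, g p ∂μs k) atTop (𝓝 (∫ p, g p ∂μ)))
    (hν : ∀ g : (Fin n → ℝ) → ℝ, Continuous g →
      Tendsto (fun k => ∫ ξ, g ξ ∂νs k) atTop (𝓝 (∫ ξ, g ξ ∂ν))) :
    LPFeasible n m T x0 Xs K Us f μ ν := by
  refine ⟨‹_›, ‹_›, hμS, hνK, fun g hg => ?_⟩
  have hDg : Continuous fun p : ℝ × (Fin n → ℝ) × (Fin m → ℝ) =>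
      fderiv ℝ g (p.1, p.2.1) (1, f p) :=
    ((hg.continuous_fderiv one_ne_zero).comp (by fun_prop)).clm_apply (by fun_prop)
  have hgT : Continuous fun ξ => g (T, ξ) := hg.continuous.comp (by fun_prop)
  exact tendsto_nhds_unique
    (((hν _ hgT).sub (hμ _ hDg)).congr fun k => (hfeas k).2.2.2.2 g hg) tendsto_const_nhds

end LPFeasible

open Filter in
theorem stmt2_general (n m : ℕ) (T : ℝ) (x0 : Fin n → ℝ)
    (Xs K : Set (Fin n → ℝ)) (Us : Set (Fin m → ℝ))
    (hX : IsCompact Xs) (hK : IsCompact K) (hU : IsCompact Us)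
    (f : ℝ × (Fin n → ℝ) × (Fin m → ℝ) → (Fin n → ℝ)) (hf : Continuous f)
    (μs : ℕ → Measure (ℝ × (Fin n → ℝ) × (Fin m → ℝ))) (νs : ℕ → Measure (Fin n → ℝ))
    (hfeas : ∀ k, LPFeasible n m T x0 Xs K Us f (μs k) (νs k)) :
    ∃ φ : ℕ → ℕ, StrictMono φ ∧
      ∃ μ ν, LPFeasible n m T x0 Xs K Us f μ ν ∧
        (∀ g : ℝ × (Fin n → ℝ) × (Fin m → ℝ) → ℝ, Continuous g →
          Tendsto (fun k => ∫ p, g p ∂(μs (φ k))) atTop (nhds (∫ p, g p ∂μ))) ∧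
        (∀ g : (Fin n → ℝ) → ℝ, Continuous g →
          Tendsto (fun k => ∫ ξ, g ξ ∂(νs (φ k))) atTop (nhds (∫ ξ, g ξ ∂ν))) := by
  obtain ⟨φ₁, hφ₁, μ, hμ, hμS, hμconv⟩ :=
    exists_subseq_tendsto_integral_of_measure_univ_eq (isCompact_Icc.prod (hX.prod hU))
      T.toNNReal μs (fun k => (hfeas k).measure_univ_eq_ofReal) (fun k => (hfeas k).2.2.1)
  obtain ⟨φ₂, hφ₂, ν, hν, hνK, hνconv⟩ :=
    exists_subseq_tendsto_integral_of_measure_univ_eq hK 1 (fun k => νs (φ₁ k))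
      (fun k => by simpa using (hfeas (φ₁ k)).measure_univ_eq_one)
      (fun k => (hfeas (φ₁ k)).2.2.2.1)
  have hμconv' := fun g hg => (hμconv g hg).comp hφ₂.tendsto_atTop
  exact ⟨φ₁ ∘ φ₂, hφ₁.comp hφ₂, μ, ν,
    LPFeasible.of_tendsto (fun k => hfeas _) hf hμS hνK hμconv' hνconv, hμconv', hνconv⟩

open Filter in
/-- the feasible set of the linear program `P` is sequentially
compact for the topology of weak convergence of measures. -/
theorem stmt2 (n m : ℕ) (T : ℝ) (hT : 0 < T) (x0 : Fin n → ℝ)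
    (Xs K : Set (Fin n → ℝ)) (Us : Set (Fin m → ℝ))
    (hX : IsCompact Xs) (hK : IsCompact K) (hU : IsCompact Us)
    (f : ℝ × (Fin n → ℝ) × (Fin m → ℝ) → (Fin n → ℝ)) (hf : Continuous f)
    (μs : ℕ → Measure (ℝ × (Fin n → ℝ) × (Fin m → ℝ))) (νs : ℕ → Measure (Fin n → ℝ))
    (hfeas : ∀ k, LPFeasible n m T x0 Xs K Us f (μs k) (νs k)) :
    ∃ φ : ℕ → ℕ, StrictMono φ ∧
      ∃ μ ν, LPFeasible n m T x0 Xs K Us f μ ν ∧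
        (∀ g : ℝ × (Fin n → ℝ) × (Fin m → ℝ) → ℝ, Continuous g →
          Tendsto (fun k => ∫ p, g p ∂(μs (φ k))) atTop (nhds (∫ p, g p ∂μ))) ∧
        (∀ g : (Fin n → ℝ) → ℝ, Continuous g →
          Tendsto (fun k => ∫ ξ, g ξ ∂(νs (φ k))) atTop (nhds (∫ ξ, g ξ ∂ν))) :=
  stmt2_general n m T x0 Xs K Us hX hK hU f hf μs νs hfeas
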